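/- Let A be a C*-algebra, N a Hilbert A-module, f : N → A a bounded A-linear functional, φ a state on A, and n ∈ ℕ. Then there exists a positive g_n ∈ A with ‖g_n‖ ≤ 1 such that |φ(f(x)) − φ(g_n f(x))| ≤ ‖f(x)‖/n ≤ ‖f‖·‖x‖/n for all x ∈ N. -/

import Mathlib

/-!
Cauchy–Schwarz for the semi-inner product `⟨x, y⟩ = φ (x⋆ y)`, applied to `e - c⋆` and `b` with
`e` running through an approximate unit (a substitute for the missing unit, with `‖e‖ ≤ 1`), gives
`|φ b - φ (c b)|² ≤ (1 - 2 Re φ c + Re φ (c c⋆)) φ (b⋆ b)`. For `c = 0` this is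
`|φ a|² ≤ φ (a⋆ a)`; so if `‖a‖ < 1` and `|φ a|² > 1 - ε²/2`, which is possible as `‖φ‖ = 1`, then
`g = a⋆ a` is a positive contraction with `Re φ g > 1 - ε²/2`, and the bracket is below `ε²`.
-/

open scoped ComplexOrder RightActions InnerProductSpace MultiplierAlgebra
open Filter

noncomputable section

variable {A : Type*} [NonUnitalCStarAlgebra A] [PartialOrder A] [StarOrderedRing A]

/-- A state on a C⋆-algebra: a positive continuous linear functional of norm one. -/
def IsState (φ : A →L[ℂ] ℂ) : Prop :=
  (∀ a : A, 0 ≤ φ (star a * a)) ∧ ‖φ‖ = 1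

/-- The Hilbert C⋆-module class as Mathlib defined it in December 2024 (right `A`-module,
`⟪x, y <• a⟫ = ⟪x, y⟫ * a`); Mathlib's `CStarModule` is now a left-module notion. -/
class RightCStarModule (A E : Type*) [NonUnitalSemiring A] [StarRing A]
    [Module ℂ A] [AddCommGroup E] [Module ℂ E] [PartialOrder A] [SMul Aᵐᵒᵖ E] [Norm A] [Norm E]
    extends Inner A E where
  inner_add_right {x} {y} {z} : inner x (y + z) = inner x y + inner x z
  inner_self_nonneg {x} : 0 ≤ inner x x
  inner_self {x} : inner x x = 0 ↔ x = 0
  inner_op_smul_right {a : A} {x y : E} : inner x (y <• a) = inner x y * a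
  inner_smul_right_complex {z : ℂ} {x} {y} : inner x (z • y) = z • inner x y
  star_inner x y : star (inner x y) = inner y x
  norm_eq_sqrt_norm_inner_self x : ‖x‖ = Real.sqrt ‖inner x x‖

variable {E : Type*} [NormedAddCommGroup E] [NormedSpace ℂ E] [SMul Aᵐᵒᵖ E] [RightCStarModule A E]

/-- `f : E → A` is `A`-linear; together with continuity and `ℂ`-linearity this says that `f`
is a bounded `A`-linear functional on the Hilbert C⋆-module `E`. -/
def IsALinear (f : E →L[ℂ] A) : Prop := ∀ (x : E) (a : A), f (x <• a) = f x * a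

/-- A `*`-`N⁰`-admissible system of `A`-linear functionals: each has norm at most one, and for
every `x ∈ N⁰` the series `Σᵢ (fᵢ x)* (fᵢ x)` is norm convergent with partial sums bounded by
`⟪x, x⟫`. -/
def StarAdmissible (N0 : Set E) (f : ℕ → E →L[ℂ] A) : Prop :=
  (∀ i, IsALinear (f i)) ∧ (∀ i, ‖f i‖ ≤ 1) ∧
    ∀ x ∈ N0, (∀ n : ℕ, ∑ i ∈ Finset.range n, star (f i x) * f i x ≤ ⟪x, x⟫_A) ∧
      Summable fun i => star (f i x) * f i x

/-- An `N⁰`-admissible system of elements of `E`: each has norm at most one and for every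
`x ∈ N⁰` the series `Σᵢ ⟪x, xᵢ⟫⟪xᵢ, x⟫` converges with partial sums bounded by `⟪x, x⟫`. -/
def Admissible (N0 : Set E) (X : ℕ → E) : Prop :=
  (∀ i, ‖X i‖ ≤ 1) ∧
    ∀ x ∈ N0, (∀ n : ℕ, ∑ i ∈ Finset.range n, ⟪x, X i⟫_A * ⟪X i, x⟫_A ≤ ⟪x, x⟫_A) ∧
      Summable fun i => ⟪x, X i⟫_A * ⟪X i, x⟫_A

/-- The pseudometric `d_{F,Φ}` associated with a system of functionals `f` and a sequence of
states `Φ`: `d_{F,Φ}(x,y)² = sup_k Σ_{i ≥ k} |φ_k (f_i (x - y))|²`. -/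
def dF (f : ℕ → E →L[ℂ] A) (Φ : ℕ → A →L[ℂ] ℂ) (x y : E) : ℝ :=
  Real.sqrt (⨆ k : ℕ, ∑' i : ℕ, ‖Φ k (f (k + i) (x - y))‖ ^ 2)

/-- The pseudometric `d_{X,Φ}` associated with a system of elements `X` and a sequence of
states `Φ`: `d_{X,Φ}(x,y)² = sup_k Σ_{i ≥ k} |φ_k ⟪x - y, x_i⟫|²`. -/
def dX (X : ℕ → E) (Φ : ℕ → A →L[ℂ] ℂ) (x y : E) : ℝ :=
  Real.sqrt (⨆ k : ℕ, ∑' i : ℕ, ‖Φ k (⟪x - y, X (k + i)⟫_A)‖ ^ 2)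

/-- `Y` is totally bounded w.r.t. the pseudometric `d`: for each `ε > 0` there is a finite
`ε`-net in `Y` consisting of elements of `Y`. -/
def TotBddWrt (Y : Set E) (d : E → E → ℝ) : Prop :=
  ∀ ε > (0 : ℝ), ∃ t : Finset E, ↑t ⊆ Y ∧ ∀ y ∈ Y, ∃ z ∈ t, d z y < ε

/-- An operator `g : A → E` is adjointable, with adjoint an `A`-functional `gs` on `E`:
`⟪g a, x⟫ = ⟪a, gs x⟫_A = a* ⬝ gs x`. -/
def AdjFromA (g : A →L[ℂ] E) : Prop :=
  ∃ gs : E →L[ℂ] A, ∀ (a : A) (x : E), ⟪g a, x⟫_A = star a * gs x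

/-- An `A`-functional `h : A → A` is adjointable: there is `hs : A → A` with
`⟪hs a, b⟫ = ⟪a, h b⟫`, i.e. `(hs a)* b = a* (h b)`. -/
def AdjFunctional (h : A →L[ℂ] A) : Prop :=
  ∃ hs : A →L[ℂ] A, ∀ a b : A, star (hs a) * b = star a * h b

/-- A functional `f : E → A` is locally adjointable if for every adjointable `A`-linear
operator `g : A → E` the composition `f ∘ g : A → A` is an adjointable functional. -/
def LocAdj (f : E →L[ℂ] A) : Prop :=
  ∀ g : A →L[ℂ] E, (∀ a b : A, g (a * b) = g a <• b) → AdjFromA g →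
    AdjFunctional (f.comp g)

/-- A functional `f : E → A` is represented by a (modular) multiplier of `E`: for every
`a ∈ A` the functional `x ↦ a* (f x)` is represented by an element of `E` (this encodes
`f ⬝ a ∈ E ⊆ M(E)`, using `E = M(E)A`). -/
def OuterRepr (f : E →L[ℂ] A) : Prop :=
  ∀ a : A, ∃ z : E, ∀ y : E, star a * f y = ⟪z, y⟫_A

/-- The Hilbert C⋆-module `E` is countably generated: there is a sequence whose set of
`A`-linear combinations is dense. -/
def CountGen (A : Type*) (E : Type*) [NonUnitalCStarAlgebra A] [PartialOrder A]
    [StarOrderedRing A] [NormedAddCommGroup E] [NormedSpace ℂ E] [SMul Aᵐᵒᵖ E]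
    [RightCStarModule A E] : Prop :=
  ∃ g : ℕ → E,
    closure (↑(Submodule.span ℂ (Set.range g ∪ {y | ∃ i, ∃ a : A, y = g i <• a})) : Set E)
      = Set.univ

/-- `F : M → E` is `A`-compact: it is a norm limit of finite sums of the elementary operators
`x ↦ y ⬝ ⟪z, x⟫`. -/
def ACompact {M : Type*} [NormedAddCommGroup M] [NormedSpace ℂ M] [SMul Aᵐᵒᵖ M]
    [RightCStarModule A M] (F : M →L[ℂ] E) : Prop :=
  ∀ ε > (0 : ℝ), ∃ (n : ℕ) (y : Fin n → E) (z : Fin n → M),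
    ∀ x : M, ‖F x - ∑ i, y i <• ⟪z i, x⟫_A‖ ≤ ε * ‖x‖

open Topology

namespace PositiveLinearMap

variable (φ : A →ₚ[ℂ] ℂ)

lemma re_apply_star_mul_self_nonneg (a : A) : 0 ≤ (φ (star a * a)).re :=
  (Complex.nonneg_iff.mp (φ.map_nonneg (star_mul_self_nonneg a))).1

lemma norm_apply_star_mul_sq_le (a b : A) :
    ‖φ (star a * b)‖ ^ 2 ≤ (φ (star a * a)).re * (φ (star b * b)).re := by
  have hsq (c : A) : ‖φ.toPreGNS c‖ ^ 2 = (φ (star c * c)).re :=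
    Real.sq_sqrt (φ.re_apply_star_mul_self_nonneg c)
  calc ‖φ (star a * b)‖ ^ 2 = ‖⟪φ.toPreGNS a, φ.toPreGNS b⟫_ℂ‖ ^ 2 := rfl
    _ ≤ (‖φ.toPreGNS a‖ * ‖φ.toPreGNS b‖) ^ 2 := by gcongr; exact norm_inner_le_norm _ _
    _ = _ := by rw [mul_pow, hsq, hsq]

lemma norm_sub_apply_mul_sq_le {φ : A →ₚ[ℂ] ℂ} (hφ : ∀ a, ‖φ a‖ ≤ ‖a‖) (c b : A) :
    ‖φ b - φ (c * b)‖ ^ 2 ≤ (1 - 2 * (φ c).re + (φ (c * star c)).re) * (φ (star b * b)).re := by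
  have hl := CStarAlgebra.increasingApproximateUnit A
  have := hl.neBot
  have hφc : Continuous φ := map_continuous φ
  refine le_of_tendsto_of_tendsto (b := CStarAlgebra.approximateUnit A)
    (f := fun e ↦ ‖φ (star (e - star c) * b)‖ ^ 2)
    (g := fun e ↦ (1 - (φ (e * star c)).re - (φ (c * e)).re + (φ (c * star c)).re) *
      (φ (star b * b)).re) ?_ ?_ ?_
  · have h : Tendsto (fun e ↦ φ (e * b) - φ (c * b)) (CStarAlgebra.approximateUnit A)
        (𝓝 (φ b - φ (c * b))) :=
      ((hφc.tendsto b).comp (hl.tendsto_mul_right b)).sub_const _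
    refine ((continuous_norm.tendsto _).comp h |>.pow 2).congr' ?_
    filter_upwards [hl.eventually_star_eq] with e he
    simp [star_sub, he, sub_mul]
  · have hre : (φ (star c)).re = (φ c).re := by rw [map_star]; rfl
    have h1 : Tendsto (fun e ↦ (φ (e * star c)).re) (CStarAlgebra.approximateUnit A)
        (𝓝 (φ c).re) :=
      hre ▸ (Complex.continuous_re.tendsto _).comp
        ((hφc.tendsto _).comp (hl.tendsto_mul_right (star c)))
    have h2 : Tendsto (fun e ↦ (φ (c * e)).re) (CStarAlgebra.approximateUnit A)
        (𝓝 (φ c).re) :=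
      (Complex.continuous_re.tendsto _).comp ((hφc.tendsto _).comp (hl.tendsto_mul_left c))
    convert (((tendsto_const_nhds (x := (1 : ℝ))).sub h1).sub h2).add_const
      (φ (c * star c)).re |>.mul_const (φ (star b * b)).re using 2
    ring
  · filter_upwards [hl.eventually_star_eq, hl.eventually_norm] with e he he1
    have hee : (φ (e * e)).re ≤ 1 :=
      calc (φ (e * e)).re ≤ ‖e * e‖ := (Complex.re_le_norm _).trans (hφ _)
        _ ≤ ‖e‖ * ‖e‖ := norm_mul_le _ _
        _ ≤ 1 := mul_le_one₀ he1 (norm_nonneg e) he1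
    calc ‖φ (star (e - star c) * b)‖ ^ 2
        ≤ (φ (star (e - star c) * (e - star c))).re * (φ (star b * b)).re :=
          φ.norm_apply_star_mul_sq_le _ _
      _ ≤ _ := by
          gcongr
          · exact φ.re_apply_star_mul_self_nonneg b
          · simp only [star_sub, star_star, he, sub_mul, mul_sub, map_sub, Complex.sub_re]
            linarith

lemma norm_apply_sq_le {φ : A →ₚ[ℂ] ℂ} (hφ : ∀ a, ‖φ a‖ ≤ ‖a‖) (a : A) :
    ‖φ a‖ ^ 2 ≤ (φ (star a * a)).re := by
  simpa using norm_sub_apply_mul_sq_le hφ 0 a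

end PositiveLinearMap

namespace IsState

def toPositiveLinearMap {φ : A →L[ℂ] ℂ} (hφ : IsState φ) : A →ₚ[ℂ] ℂ :=
  .mk₀ φ.toLinearMap fun x hx ↦ by
    obtain ⟨y, rfl⟩ := CStarAlgebra.nonneg_iff_eq_star_mul_self.mp hx
    exact hφ.1 y

lemma exists_nonneg_norm_le_one_norm_sub_apply_mul_le {φ : A →L[ℂ] ℂ} (hφ : IsState φ)
    {ε : ℝ} (hε : 0 < ε) :
    ∃ g : A, 0 ≤ g ∧ ‖g‖ ≤ 1 ∧ ∀ b : A, ‖φ b - φ (g * b)‖ ≤ ε * ‖b‖ := by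
  set ψ := hφ.toPositiveLinearMap
  have hψ (a : A) : ‖ψ a‖ ≤ ‖a‖ := (φ.le_opNorm a).trans_eq (by rw [hφ.2, one_mul])
  have hre (a : A) : (ψ a).re ≤ ‖a‖ := (Complex.re_le_norm _).trans (hψ a)
  have hr : √(1 - ε ^ 2 / 2) < ‖φ‖ := by
    rw [hφ.2, Real.sqrt_lt' one_pos]
    linarith [pow_pos hε 2]
  obtain ⟨a, ha1, ha⟩ := φ.exists_lt_apply_of_lt_opNorm hr
  have hg1 : ‖star a * a‖ ≤ 1 := by
    rw [CStarRing.norm_star_mul_self]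
    exact mul_le_one₀ ha1.le (norm_nonneg a) ha1.le
  have hg : 1 - ε ^ 2 / 2 < (ψ (star a * a)).re :=
    calc 1 - ε ^ 2 / 2 < ‖ψ a‖ ^ 2 :=
          (Real.sqrt_lt' ((Real.sqrt_nonneg _).trans_lt ha)).mp ha
      _ ≤ (ψ (star a * a)).re := ψ.norm_apply_sq_le hψ a
  have hgg : (ψ (star a * a * star (star a * a))).re ≤ 1 :=
    (hre _).trans <| (norm_mul_le _ _).trans <| by
      rw [norm_star]; exact mul_le_one₀ hg1 (norm_nonneg _) hg1
  refine ⟨star a * a, star_mul_self_nonneg a, hg1, fun b ↦ ?_⟩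
  have hbb : (ψ (star b * b)).re ≤ ‖b‖ ^ 2 := by
    simpa only [CStarRing.norm_star_mul_self, sq] using hre (star b * b)
  rw [← pow_le_pow_iff_left₀ (norm_nonneg _) (by positivity) two_ne_zero]
  calc ‖φ b - φ (star a * a * b)‖ ^ 2
      ≤ (1 - 2 * (ψ (star a * a)).re + (ψ (star a * a * star (star a * a))).re) *
          (ψ (star b * b)).re :=
        ψ.norm_sub_apply_mul_sq_le hψ (star a * a) b
    _ ≤ ε ^ 2 * ‖b‖ ^ 2 :=
        mul_le_mul (by linarith) hbb (ψ.re_apply_star_mul_self_nonneg b) (sq_nonneg ε)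
    _ = (ε * ‖b‖) ^ 2 := by ring

end IsState

theorem statement13_general (f : E →L[ℂ] A) (φ : A →L[ℂ] ℂ) (hφ : IsState φ)
    (n : ℕ) (hn : 0 < n) :
    ∃ g : A, 0 ≤ g ∧ ‖g‖ ≤ 1 ∧ ∀ x : E,
      ‖φ (f x) - φ (g * f x)‖ ≤ ‖f x‖ / n ∧ ‖f x‖ / n ≤ ‖f‖ * ‖x‖ / n := by
  obtain ⟨g, hg0, hg1, hg⟩ :=
    hφ.exists_nonneg_norm_le_one_norm_sub_apply_mul_le (ε := 1 / n) (by positivity)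
  refine ⟨g, hg0, hg1, fun x ↦ ⟨?_, ?_⟩⟩
  · simpa [div_eq_inv_mul] using hg (f x)
  · gcongr
    exact f.le_opNorm x

/-- For a bounded `A`-linear functional `f : N → A`, a state `φ` and `n ≥ 1` there is a positive
`g ∈ A`, `‖g‖ ≤ 1`, with `|φ(f x) − φ(g (f x))| ≤ ‖f x‖/n ≤ ‖f‖ ‖x‖ / n` for all `x`. -/
theorem statement13 (f : E →L[ℂ] A) (hf : IsALinear f) (φ : A →L[ℂ] ℂ) (hφ : IsState φ)
    (n : ℕ) (hn : 0 < n) :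
    ∃ g : A, 0 ≤ g ∧ ‖g‖ ≤ 1 ∧ ∀ x : E,
      ‖φ (f x) - φ (g * f x)‖ ≤ ‖f x‖ / n ∧ ‖f x‖ / n ≤ ‖f‖ * ‖x‖ / n :=
  statement13_general f φ hφ n hn
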